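/- arXiv:1602.01938 — 2 statements merged into one kernel-verified Lean document; each statement's English description precedes it below -/
import Mathlib

section
/- Let F be the skew-product transformation F(ω,x)=(σω,f_{ω_0}(x)) on Σ_m×X associated to continuous maps f_0,…,f_{m−1} of a compact metric space X, and let g(ω,x)=c+φ(x) for a constant c∈ℝ and φ∈C(X,ℝ). Then the classical topological pressure of F with respect to g satisfies P(F,g)=c+log m+P(f_0,…,f_{m−1},φ), where P(f_0,…,f_{m−1},φ) is the topological pressure of the free semigroup action generated by f_0,…,f_{m−1} with respect to φ. -/
open Filter Topology MeasureTheory Set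

namespace FSA

/-- `f_w = f_{w₁} ∘ ⋯ ∘ f_{w_k}` for the word `w = [w₁,…,w_k]`; the empty word acts as
the identity. -/
def wordMap {X : Type*} {ι : Type*} (f : ι → X → X) : List ι → X → X
  | [] => id
  | a :: t => f a ∘ wordMap f t

/-- `(S_wφ)(x) = Σ_{w'} φ(f_{w'}x)`, summing over the `|w|` words `w'` consisting of the
empty word and the proper suffixes of `w`. -/
noncomputable def birkhoff {X : Type*} {ι : Type*} (f : ι → X → X) (φ : X → ℝ)
    (w : List ι) (x : X) : ℝ :=
  (w.tails.tail.map fun w' => φ (wordMap f w' x)).sum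

section Core

variable {X : Type*} {ι : Type*}

/-- Bowen metric `d_w(x,y) = max_{w'≤w} d(f_{w'}x, f_{w'}y)`, the maximum ranging over all
suffixes of `w` (including `w` itself and the empty word). -/
noncomputable def bowenDist [PseudoMetricSpace X] (f : ι → X → X) (w : List ι) (x y : X) : ℝ :=
  (w.tails.map fun w' => dist (wordMap f w' x) (wordMap f w' y)).foldr max 0

/-- `E` is a `(w,ε)`-spanning set. -/
def IsSpanningSet [PseudoMetricSpace X] (f : ι → X → X) (w : List ι) (ε : ℝ)
    (E : Finset X) : Prop :=
  ∀ x : X, ∃ y ∈ E, bowenDist f w x y < ε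

/-- `E` is a `(w,ε)`-separated set. -/
def IsSeparatedSet [PseudoMetricSpace X] (f : ι → X → X) (w : List ι) (ε : ℝ)
    (E : Finset X) : Prop :=
  ∀ x ∈ E, ∀ y ∈ E, x ≠ y → ε ≤ bowenDist f w x y

/-- `Q_w(φ,ε) = inf { Σ_{x∈E} e^{(S_wφ)(x)} : E a (w,ε)-spanning set }`. -/
noncomputable def Qword [PseudoMetricSpace X] (f : ι → X → X) (φ : X → ℝ) (w : List ι)
    (ε : ℝ) : ℝ :=
  sInf {s : ℝ | ∃ E : Finset X, IsSpanningSet f w ε E ∧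
    s = ∑ x ∈ E, Real.exp (birkhoff f φ w x)}

/-- `P_w(φ,ε) = sup { Σ_{x∈E} e^{(S_wφ)(x)} : E a (w,ε)-separated set }`. -/
noncomputable def Pword [PseudoMetricSpace X] (f : ι → X → X) (φ : X → ℝ) (w : List ι)
    (ε : ℝ) : ℝ :=
  sSup {s : ℝ | ∃ E : Finset X, IsSeparatedSet f w ε E ∧
    s = ∑ x ∈ E, Real.exp (birkhoff f φ w x)}

/-- `Q_n(φ,ε) = m^{-n} Σ_{|w|=n} Q_w(φ,ε)`. -/
noncomputable def Qn [PseudoMetricSpace X] [Fintype ι] (f : ι → X → X) (φ : X → ℝ)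
    (n : ℕ) (ε : ℝ) : ℝ :=
  (1 / (Fintype.card ι : ℝ) ^ n) * ∑ w : Fin n → ι, Qword f φ (List.ofFn w) ε

/-- `P_n(φ,ε) = m^{-n} Σ_{|w|=n} P_w(φ,ε)`. -/
noncomputable def Pn [PseudoMetricSpace X] [Fintype ι] (f : ι → X → X) (φ : X → ℝ)
    (n : ℕ) (ε : ℝ) : ℝ :=
  (1 / (Fintype.card ι : ℝ) ^ n) * ∑ w : Fin n → ι, Pword f φ (List.ofFn w) ε

/-- Topological pressure of the free semigroup action,
`P(f₀,…,f_{m-1},φ) = lim_{ε→0} limsup_{n→∞} (1/n) log Q_n(φ,ε)`.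
Since the inner quantity is nonincreasing in `ε`, the limit as `ε → 0⁺` equals the
supremum over `ε > 0`. -/
noncomputable def pressure [PseudoMetricSpace X] [Fintype ι] (f : ι → X → X) (φ : X → ℝ) :
    EReal :=
  ⨆ (ε : ℝ) (_ : 0 < ε),
    Filter.limsup (fun n : ℕ => (↑(Real.log (Qn f φ n ε) / (n : ℝ)) : EReal)) atTop

end Core

section Sigma

open scoped Classical

/-- The two-sided full shift space `Σ_m` of sequences `(…,ω₋₁,ω₀,ω₁,…)` with entries in
`{0,…,m-1}`. -/
def SigmaSpace (m : ℕ) : Type := ℤ → Fin m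

/-- The metric `d(ω,ω') = 2^{-k}`, `k = min {|n| : ωₙ ≠ ω'ₙ}` on `Σ_m`. -/
noncomputable def sdist (m : ℕ) (ω ω' : SigmaSpace m) : ℝ :=
  if ω = ω' then 0
  else (1 / 2 : ℝ) ^ sInf {k : ℕ | ∃ n : ℤ, n.natAbs = k ∧ ω n ≠ ω' n}

lemma sdist_nonneg (m : ℕ) (ω ω' : SigmaSpace m) : 0 ≤ sdist m ω ω' := by
  unfold sdist
  split
  · exact le_refl 0
  · positivity

lemma sdist_self (m : ℕ) (ω : SigmaSpace m) : sdist m ω ω = 0 := by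
  simp [sdist]

lemma sdist_comm (m : ℕ) (ω ω' : SigmaSpace m) : sdist m ω ω' = sdist m ω' ω := by
  unfold sdist
  by_cases h : ω = ω'
  · simp [h]
  · rw [if_neg h, if_neg (fun h' => h h'.symm)]
    congr 2
    ext k
    exact ⟨fun ⟨n, h1, h2⟩ => ⟨n, h1, h2.symm⟩, fun ⟨n, h1, h2⟩ => ⟨n, h1, h2.symm⟩⟩

lemma sdist_triangle (m : ℕ) (x y z : SigmaSpace m) :
    sdist m x z ≤ sdist m x y + sdist m y z := by
  by_cases hxz : x = z
  · rw [sdist, if_pos hxz]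
    exact add_nonneg (sdist_nonneg m x y) (sdist_nonneg m y z)
  · by_cases hxy : x = y
    · subst hxy
      rw [sdist_self]
      simp
    · by_cases hyz : y = z
      · subst hyz
        rw [sdist_self]
        simp
      · unfold sdist
        rw [if_neg hxz, if_neg hxy, if_neg hyz]
        set S₀ := {k : ℕ | ∃ n : ℤ, n.natAbs = k ∧ x n ≠ z n} with hS₀def
        set S₁ := {k : ℕ | ∃ n : ℤ, n.natAbs = k ∧ x n ≠ y n} with hS₁def
        set S₂ := {k : ℕ | ∃ n : ℤ, n.natAbs = k ∧ y n ≠ z n} with hS₂def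
        have hne : S₀.Nonempty := by
          rcases Function.ne_iff.mp hxz with ⟨n, hn⟩
          exact ⟨n.natAbs, n, rfl, hn⟩
        obtain ⟨n, hn, hnxz⟩ := Nat.sInf_mem hne
        have hcase : x n ≠ y n ∨ y n ≠ z n := by
          by_contra hc
          push_neg at hc
          exact hnxz (hc.1.trans hc.2)
        rcases hcase with h | h
        · have h1 : sInf S₁ ≤ sInf S₀ := Nat.sInf_le ⟨n, hn, h⟩
          have h3 : (1 / 2 : ℝ) ^ sInf S₀ ≤ (1 / 2 : ℝ) ^ sInf S₁ :=
            pow_le_pow_of_le_one (by norm_num) (by norm_num) h1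
          have h2 : (0:ℝ) ≤ (1 / 2 : ℝ) ^ sInf S₂ := by positivity
          linarith
        · have h1 : sInf S₂ ≤ sInf S₀ := Nat.sInf_le ⟨n, hn, h⟩
          have h3 : (1 / 2 : ℝ) ^ sInf S₀ ≤ (1 / 2 : ℝ) ^ sInf S₂ :=
            pow_le_pow_of_le_one (by norm_num) (by norm_num) h1
          have h2 : (0:ℝ) ≤ (1 / 2 : ℝ) ^ sInf S₁ := by positivity
          linarith

lemma eq_of_sdist_eq_zero (m : ℕ) (x y : SigmaSpace m) (h : sdist m x y = 0) : x = y := by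
  by_contra hxy
  rw [sdist, if_neg hxy] at h
  have : (0:ℝ) < (1 / 2 : ℝ) ^ sInf {k : ℕ | ∃ n : ℤ, n.natAbs = k ∧ x n ≠ y n} := by
    positivity
  linarith

noncomputable instance (m : ℕ) : MetricSpace (SigmaSpace m) where
  dist := sdist m
  dist_self := sdist_self m
  dist_comm := sdist_comm m
  dist_triangle := sdist_triangle m
  eq_of_dist_eq_zero := eq_of_sdist_eq_zero m _ _

/-- The Bernoulli shift `(σω)ᵢ = ω_{i+1}` on `Σ_m`. -/
def shift (m : ℕ) : SigmaSpace m → SigmaSpace m := fun ω i => ω (i + 1)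

end Sigma

end FSA

/-!
Along `n` steps, the Bowen ball of radius `2⁻ᴷ` of the skew product around `(ω, x)` consists of
the points `(ω', x')` with `ω'` agreeing with `ω` on `[-K, n + K]` and `x'` in the Bowen ball of
`x` along the word `ω_{n-1} ⋯ ω_0`, on which the Birkhoff sum of `c + φ` is
`n c + S_{ω_{n-1} ⋯ ω_0} φ`. So, up to the `m^{2K+1}` choices of the symbols on
`[-K, 0) ∪ [n, n + K]`, a spanning set of the skew product is a disjoint union over the `m^n`
words `w` of spanning sets along `w`, whence
`e^{nc} Σ_{|w|=n} Q_w(φ, 2⁻ᴷ) ≤ Q_n(g, 2⁻ᴷ) ≤ m^{2K+1} e^{nc} Σ_{|w|=n} Q_w(φ, 2⁻ᴷ)`.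
As `Σ_{|w|=n} Q_w = m^n Q_n(φ, ·)`, taking `limsup (1/n) log` and then `K → ∞` gives the formula.
-/
theorem Real.le_sum_sInf_of_forall_mem {U : Type*} [Fintype U] {S : U → Set ℝ}
    (hS : ∀ u, (S u).Nonempty) {A : ℝ} (h : ∀ s : U → ℝ, (∀ u, s u ∈ S u) → A ≤ ∑ u, s u) :
    A ≤ ∑ u, sInf (S u) := by
  refine le_of_forall_pos_le_add fun δ hδ => ?_
  have hN : (0 : ℝ) < Fintype.card U + 1 := by positivity
  choose s hsS hs using fun u => Real.lt_sInf_add_pos (hS u) (div_pos hδ hN)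
  calc A ≤ ∑ u, s u := h s hsS
    _ ≤ ∑ u, (sInf (S u) + δ / (Fintype.card U + 1)) := Finset.sum_le_sum fun u _ => (hs u).le
    _ ≤ ∑ u, sInf (S u) + δ := by
      rw [Finset.sum_add_distrib, Finset.sum_const, Finset.card_univ, nsmul_eq_mul, mul_div_assoc']
      gcongr
      rw [div_le_iff₀ hN]
      linarith

theorem EReal.limsup_add_of_tendsto_coe {α : Type*} {l : Filter α} [l.NeBot] {u v : α → EReal}
    {a : ℝ} (hv : Tendsto v l (𝓝 a)) : limsup (u + v) l = limsup u l + a := by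
  apply le_antisymm
  · have := EReal.limsup_add_le (u := u) (f := l) (Or.inr (hv.limsup_eq ▸ EReal.coe_ne_top a))
      (Or.inr (hv.limsup_eq ▸ EReal.coe_ne_bot a))
    rwa [hv.limsup_eq] at this
  · simpa [hv.liminf_eq] using EReal.le_limsup_add (u := u) (v := v) (f := l)

theorem EReal.coe_add_iSup {ι : Sort*} (r : ℝ) (s : ι → EReal) :
    (r : EReal) + ⨆ i, s i = ⨆ i, ((r : EReal) + s i) := by
  refine le_antisymm (EReal.add_le_of_forall_lt fun a ha b hb => ?_)
    (iSup_le fun i => add_le_add le_rfl (le_iSup s i))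
  obtain ⟨i, hi⟩ := lt_iSup_iff.1 hb
  exact (add_le_add ha.le hi.le).trans (le_iSup (fun i => (r : EReal) + s i) i)

theorem limsup_log_div_eq_add {a b : ℕ → ℝ} {R D : ℝ} (ha : ∀ n, 0 < a n)
    (hlo : ∀ n : ℕ, Real.exp (n * R) * a n ≤ b n)
    (hhi : ∀ n : ℕ, b n ≤ D * (Real.exp (n * R) * a n)) :
    limsup (fun n : ℕ => ((Real.log (b n) / n : ℝ) : EReal)) atTop =
      (R : EReal) + limsup (fun n : ℕ => ((Real.log (a n) / n : ℝ) : EReal)) atTop := by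
  have hea : ∀ n : ℕ, 0 < Real.exp (n * R) * a n := fun n => mul_pos (Real.exp_pos _) (ha n)
  have hb : ∀ n, 0 < b n := fun n => (hea n).trans_le (hlo n)
  have hD : 0 < D := pos_of_mul_pos_left ((hb 0).trans_le (hhi 0)) (hea 0).le
  have hlog_lo : ∀ n : ℕ, n * R + Real.log (a n) ≤ Real.log (b n) := fun n => by
    simpa [Real.log_mul, (ha n).ne'] using Real.log_le_log (hea n) (hlo n)
  have hlog_hi : ∀ n : ℕ, Real.log (b n) ≤ Real.log D + (n * R + Real.log (a n)) := fun n => by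
    simpa [Real.log_mul, hD.ne', (ha n).ne'] using Real.log_le_log (hb n) (hhi n)
  set e : ℕ → ℝ := fun n => (Real.log (b n) - Real.log (a n)) / n
  have he : Tendsto e atTop (𝓝 R) := by
    refine tendsto_of_tendsto_of_tendsto_of_le_of_le' tendsto_const_nhds
      (by simpa using (tendsto_const_div_atTop_nhds_zero_nat (Real.log D)).const_add R) ?_ ?_
    all_goals
      filter_upwards [eventually_gt_atTop 0] with n hn
      have hn : (0 : ℝ) < n := by exact_mod_cast hn
    · rw [le_div_iff₀ hn]
      linarith [hlog_lo n]
    · rw [div_le_iff₀ hn, add_mul, div_mul_cancel₀ _ hn.ne']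
      linarith [hlog_hi n]
  have hsplit : (fun n : ℕ => ((Real.log (b n) / n : ℝ) : EReal)) =
      (fun n : ℕ => ((Real.log (a n) / n : ℝ) : EReal)) + fun n => ((e n : ℝ) : EReal) := by
    funext n
    simp only [Pi.add_apply, ← EReal.coe_add, e]
    ring_nf
  rw [hsplit, EReal.limsup_add_of_tendsto_coe (EReal.tendsto_coe.2 he), add_comm]

namespace FSA

section FreeSemigroupAction

variable {X ι : Type*}

@[simp] theorem wordMap_nil (f : ι → X → X) : wordMap f [] = id := rfl

@[simp] theorem wordMap_cons (f : ι → X → X) (a : ι) (w : List ι) (x : X) :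
    wordMap f (a :: w) x = f a (wordMap f w x) := rfl

theorem wordMap_const_replicate (F : X → X) (a : ι) (n : ℕ) :
    wordMap (fun _ => F) (List.replicate n a) = F^[n] := by
  induction n with
  | zero => rfl
  | succ n ih => funext x; simp [List.replicate_succ, ih, Function.iterate_succ_apply']

@[simp] theorem birkhoff_nil (f : ι → X → X) (φ : X → ℝ) (x : X) : birkhoff f φ [] x = 0 := by
  simp [birkhoff]

@[simp] theorem birkhoff_cons (f : ι → X → X) (φ : X → ℝ) (a : ι) (w : List ι) (x : X) :
    birkhoff f φ (a :: w) x = φ (wordMap f w x) + birkhoff f φ w x := by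
  cases w <;> simp [birkhoff]

theorem mul_le_birkhoff (f : ι → X → X) {φ : X → ℝ} {C : ℝ} (hφ : ∀ x, C ≤ φ x) (w : List ι)
    (x : X) : w.length * C ≤ birkhoff f φ w x := by
  induction w with
  | nil => simp
  | cons a w ih =>
    simp only [birkhoff_cons, List.length_cons]
    push_cast
    linarith [hφ (wordMap f w x)]

theorem continuous_wordMap [TopologicalSpace X] {f : ι → X → X} (hf : ∀ i, Continuous (f i))
    (w : List ι) : Continuous (wordMap f w) := by
  induction w with
  | nil => exact continuous_id
  | cons a w ih => exact (hf a).comp ih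

end FreeSemigroupAction

section BowenMetric

variable {X ι : Type*} [PseudoMetricSpace X] {f : ι → X → X}

@[simp] theorem bowenDist_nil (f : ι → X → X) (x y : X) : bowenDist f [] x y = dist x y := by
  simp [bowenDist]

theorem bowenDist_cons (f : ι → X → X) (a : ι) (w : List ι) (x y : X) :
    bowenDist f (a :: w) x y =
      max (dist (wordMap f (a :: w) x) (wordMap f (a :: w) y)) (bowenDist f w x y) := by
  simp [bowenDist]

@[simp] theorem bowenDist_self (f : ι → X → X) (w : List ι) (x : X) : bowenDist f w x x = 0 := by
  induction w with
  | nil => simp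
  | cons a w ih => simp [bowenDist_cons, ih]

theorem continuous_bowenDist (hf : ∀ i, Continuous (f i)) (w : List ι) (y : X) :
    Continuous fun x => bowenDist f w x y := by
  induction w with
  | nil => simpa using continuous_id.dist continuous_const
  | cons a w ih =>
    simp only [bowenDist_cons]
    exact ((continuous_wordMap hf _).dist continuous_const).max ih

theorem bowenDist_lt_iff_of_cons {W : ℕ → List ι} (a : ℕ → ι) (h0 : W 0 = [])
    (hsucc : ∀ j, W (j + 1) = a j :: W j) {ε : ℝ} (n : ℕ) (x y : X) :
    bowenDist f (W n) x y < ε ↔ ∀ j ≤ n, dist (wordMap f (W j) x) (wordMap f (W j) y) < ε := by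
  induction n with
  | zero => simp [h0]
  | succ n ih =>
    rw [hsucc, bowenDist_cons, max_lt_iff, ← hsucc, ih]
    simp only [Nat.le_succ_iff, or_imp, forall_and, forall_eq]
    exact and_comm

theorem bowenDist_const_lt_iff (F : X → X) (a : ι) {ε : ℝ} (n : ℕ) (x y : X) :
    bowenDist (fun _ => F) (List.replicate n a) x y < ε ↔
      ∀ j ≤ n, dist (F^[j] x) (F^[j] y) < ε := by
  simp only [bowenDist_lt_iff_of_cons (W := fun j => List.replicate j a) (fun _ => a) rfl
    (fun _ => rfl), wordMap_const_replicate]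

end BowenMetric

section Pressure

variable {X ι : Type*} [PseudoMetricSpace X] {f : ι → X → X} {φ : X → ℝ}

def HasSpanningSets (f : ι → X → X) : Prop :=
  ∀ (w : List ι) (ε : ℝ), 0 < ε → ∃ E : Finset X, IsSpanningSet f w ε E

theorem IsSpanningSet.mono {w : List ι} {ε ε' : ℝ} {E : Finset X} (hE : IsSpanningSet f w ε E)
    (h : ε ≤ ε') : IsSpanningSet f w ε' E := fun x =>
  let ⟨y, hy, hxy⟩ := hE x
  ⟨y, hy, hxy.trans_le h⟩

theorem IsSpanningSet.nonempty [Nonempty X] {w : List ι} {ε : ℝ} {E : Finset X}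
    (hE : IsSpanningSet f w ε E) : E.Nonempty :=
  let ⟨y, hy, _⟩ := hE (Classical.arbitrary X)
  ⟨y, hy⟩

theorem hasSpanningSets_of_compactSpace [CompactSpace X] (hf : ∀ i, Continuous (f i)) :
    HasSpanningSets f := by
  intro w ε hε
  obtain ⟨E, hE⟩ := isCompact_univ.elim_finite_subcover (fun y : X => {x | bowenDist f w x y < ε})
    (fun y => isOpen_lt (continuous_bowenDist hf w y) continuous_const)
    (fun x _ => mem_iUnion.2 ⟨x, by simpa using hε⟩)
  refine ⟨E, fun x => ?_⟩
  simpa using hE (mem_univ x)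

theorem Qword_le_sum (φ : X → ℝ) {w : List ι} {ε : ℝ} {E : Finset X}
    (hE : IsSpanningSet f w ε E) : Qword f φ w ε ≤ ∑ x ∈ E, Real.exp (birkhoff f φ w x) := by
  refine csInf_le ⟨0, ?_⟩ ⟨E, hE, rfl⟩
  rintro _ ⟨E', -, rfl⟩
  positivity

theorem exp_mul_le_Qword [Nonempty X] {C : ℝ} (hφ : ∀ x, C ≤ φ x) {w : List ι} {ε : ℝ}
    (hspan : ∃ E, IsSpanningSet f w ε E) : Real.exp (w.length * C) ≤ Qword f φ w ε := by
  obtain ⟨E₀, hE₀⟩ := hspan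
  refine le_csInf ⟨_, E₀, hE₀, rfl⟩ ?_
  rintro _ ⟨E, hE, rfl⟩
  obtain ⟨y, hy⟩ := hE.nonempty
  calc Real.exp (w.length * C) ≤ Real.exp (birkhoff f φ w y) :=
        Real.exp_le_exp.2 (mul_le_birkhoff f hφ w y)
    _ ≤ ∑ x ∈ E, Real.exp (birkhoff f φ w x) :=
        Finset.single_le_sum (fun x _ => (Real.exp_pos _).le) hy

theorem Qword_anti (φ : X → ℝ) {w : List ι} {ε₁ ε₂ : ℝ} (hspan : ∃ E, IsSpanningSet f w ε₁ E)
    (h : ε₁ ≤ ε₂) : Qword f φ w ε₂ ≤ Qword f φ w ε₁ := by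
  obtain ⟨E₀, hE₀⟩ := hspan
  refine csInf_le_csInf ⟨0, ?_⟩ ⟨_, E₀, hE₀, rfl⟩ ?_
  · rintro _ ⟨E, -, rfl⟩
    positivity
  · rintro _ ⟨E, hE, rfl⟩
    exact ⟨E, hE.mono h, rfl⟩

variable [Fintype ι]

theorem card_pow_mul_Qn [Nonempty ι] (f : ι → X → X) (φ : X → ℝ) (n : ℕ) (ε : ℝ) :
    (Fintype.card ι : ℝ) ^ n * Qn f φ n ε = ∑ w : Fin n → ι, Qword f φ (List.ofFn w) ε := by
  have : (Fintype.card ι : ℝ) ^ n ≠ 0 := by positivity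
  rw [Qn]
  field_simp

theorem Qn_pos [Nonempty X] [Nonempty ι] (hspan : HasSpanningSets f) {C : ℝ}
    (hφ : ∀ x, C ≤ φ x) (n : ℕ) {ε : ℝ} (hε : 0 < ε) : 0 < Qn f φ n ε := by
  refine mul_pos (by positivity) (Finset.sum_pos (fun w _ => ?_) Finset.univ_nonempty)
  exact (Real.exp_pos _).trans_le (exp_mul_le_Qword hφ (hspan _ ε hε))

theorem Qn_anti (hspan : HasSpanningSets f) (φ : X → ℝ) (n : ℕ) {ε₁ ε₂ : ℝ} (hε₁ : 0 < ε₁)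
    (h : ε₁ ≤ ε₂) : Qn f φ n ε₂ ≤ Qn f φ n ε₁ := by
  refine mul_le_mul_of_nonneg_left (Finset.sum_le_sum fun w _ => ?_) (by positivity)
  exact Qword_anti φ (hspan _ ε₁ hε₁) h

theorem Qn_fin_one (F : X → X) (g : X → ℝ) (n : ℕ) (ε : ℝ) :
    Qn (fun _ : Fin 1 => F) g n ε = Qword (fun _ : Fin 1 => F) g (List.replicate n 0) ε := by
  simp [Qn, List.ofFn_const, Subsingleton.elim _ (0 : Fin 1)]

noncomputable def pressureAt (f : ι → X → X) (φ : X → ℝ) (ε : ℝ) : EReal :=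
  limsup (fun n : ℕ => (↑(Real.log (Qn f φ n ε) / (n : ℝ)) : EReal)) atTop

theorem pressureAt_anti [Nonempty X] [Nonempty ι] (hspan : HasSpanningSets f) {C : ℝ}
    (hφ : ∀ x, C ≤ φ x) {ε₁ ε₂ : ℝ} (hε₁ : 0 < ε₁) (h : ε₁ ≤ ε₂) :
    pressureAt f φ ε₂ ≤ pressureAt f φ ε₁ := by
  refine limsup_le_limsup (Eventually.of_forall fun n => EReal.coe_le_coe_iff.2 ?_)
  gcongr
  · exact Qn_pos hspan hφ n (hε₁.trans_le h)
  · exact Qn_anti hspan φ n hε₁ h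

theorem pressure_eq_iSup_half_pow [Nonempty X] [Nonempty ι] (hspan : HasSpanningSets f)
    {C : ℝ} (hφ : ∀ x, C ≤ φ x) :
    pressure f φ = ⨆ K : ℕ, pressureAt f φ ((1 / 2 : ℝ) ^ K) := by
  apply le_antisymm
  · refine iSup₂_le fun ε hε => ?_
    obtain ⟨K, hK⟩ := exists_pow_lt_of_lt_one hε (by norm_num : (1 / 2 : ℝ) < 1)
    exact (pressureAt_anti hspan hφ (by positivity) hK.le).trans (le_iSup_of_le K le_rfl)
  · exact iSup_le fun K => le_iSup₂_of_le ((1 / 2 : ℝ) ^ K) (by positivity) le_rfl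

end Pressure

section Shift

variable {m : ℕ}

instance [NeZero m] : Nonempty (SigmaSpace m) := ⟨fun _ => 0⟩

theorem dist_lt_half_pow_iff {ω ω' : SigmaSpace m} {K : ℕ} :
    dist ω ω' < (1 / 2 : ℝ) ^ K ↔ EqOn ω ω' (Icc (-K : ℤ) K) := by
  change sdist m ω ω' < _ ↔ _
  by_cases h : ω = ω'
  · subst h
    exact iff_of_true (by rw [sdist_self]; positivity) (eqOn_refl _ _)
  rw [sdist, if_neg h, pow_lt_pow_iff_right_of_lt_one₀ (by norm_num) (by norm_num)]
  constructor
  · intro hK t ht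
    by_contra hne
    have := Nat.sInf_le
      (show t.natAbs ∈ {k : ℕ | ∃ n : ℤ, n.natAbs = k ∧ ω n ≠ ω' n} from ⟨t, rfl, hne⟩)
    simp only [mem_Icc] at ht
    omega
  · intro hagree
    by_contra hK
    obtain ⟨t, ht, hne⟩ := Nat.sInf_mem (s := {k : ℕ | ∃ n : ℤ, n.natAbs = k ∧ ω n ≠ ω' n})
      (let ⟨t, ht⟩ := Function.ne_iff.mp h; ⟨t.natAbs, t, rfl, ht⟩)
    exact hne (hagree (by simp only [mem_Icc]; omega))

theorem shift_iterate_apply (j : ℕ) (ω : SigmaSpace m) (i : ℤ) :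
    (shift m)^[j] ω i = ω (i + j) := by
  induction j generalizing ω with
  | zero => simp
  | succ j ih =>
    rw [Function.iterate_succ_apply, ih]
    change ω (i + j + 1) = _
    push_cast
    ring_nf

theorem forall_dist_shift_iterate_lt_iff {ω ω' : SigmaSpace m} {K : ℕ} (n : ℕ) :
    (∀ j ≤ n, dist ((shift m)^[j] ω) ((shift m)^[j] ω') < (1 / 2 : ℝ) ^ K) ↔
      EqOn ω ω' (Icc (-K : ℤ) (n + K)) := by
  simp only [dist_lt_half_pow_iff, EqOn, mem_Icc, shift_iterate_apply]
  constructor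
  · intro h t ht
    -- `t` lies in the window of radius `K` around the time `j = min n t.toNat`.
    have := @h (min n t.toNat) (min_le_left _ _) (t - ((min n t.toNat : ℕ) : ℤ))
      ⟨by omega, by omega⟩
    rwa [sub_add_cancel] at this
  · intro h j hj i hi
    exact h (by omega)

/-- `f_{orbitWord n ω} = f_{ω_{n-1}} ∘ ⋯ ∘ f_{ω_0}` is the fibre map of the `n`-th iterate of the
skew product. -/
def orbitWord : ℕ → SigmaSpace m → List (Fin m)
  | 0, _ => []
  | n + 1, ω => ω n :: orbitWord n ω

theorem orbitWord_congr {ω ω' : SigmaSpace m} {n : ℕ} (h : EqOn ω ω' (Ico 0 n)) :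
    orbitWord n ω = orbitWord n ω' := by
  induction n with
  | zero => rfl
  | succ n ih =>
    simp only [orbitWord]
    rw [h (by simp), ih (h.mono (Ico_subset_Ico_right (by omega)))]

def window (n : ℕ) (ω : SigmaSpace m) : Fin n → Fin m := fun i => ω (n - 1 - i)

theorem orbitWord_eq_ofFn_window (n : ℕ) (ω : SigmaSpace m) :
    orbitWord n ω = List.ofFn (window n ω) := by
  induction n with
  | zero => rfl
  | succ n ih =>
    rw [List.ofFn_succ, orbitWord, ih]
    congr 1
    · simp [window]
    · congr 1
      funext i
      simp only [window, Fin.val_succ]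
      push_cast
      ring_nf

/-- The point of `Σ_m` whose coordinates on `[0, n)` are read off `u` (backwards, as in `window`)
and whose coordinates on `[-K, 0) ∪ [n, n + K]` are read off `v`. -/
def glue {n : ℕ} (K : ℕ) (u : Fin n → Fin m) (v : Fin (2 * K + 1) → Fin m) : SigmaSpace m :=
  fun i => if h : 0 ≤ i ∧ i < n then u (Fin.rev ⟨i.toNat, by omega⟩)
    else if i < 0 then v ⟨min (2 * K) (i + K).toNat, by omega⟩
    else v ⟨min (2 * K) (i - n + K).toNat, by omega⟩

theorem window_glue {n : ℕ} (K : ℕ) (u : Fin n → Fin m) (v : Fin (2 * K + 1) → Fin m) :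
    window n (glue K u v) = u := by
  funext i
  have hi := i.isLt
  rw [window, glue, dif_pos (by omega)]
  congr 1
  ext
  simp only [Fin.val_rev]
  omega

theorem exists_eqOn_glue (n K : ℕ) (ω : SigmaSpace m) :
    ∃ v, EqOn ω (glue K (window n ω) v) (Icc (-K : ℤ) (n + K)) := by
  refine ⟨fun j => ω (if (j : ℕ) < K then j - K else j - K + n), fun t ht => ?_⟩
  simp only [mem_Icc] at ht
  simp only [glue, window]
  split_ifs <;> congr 1 <;> (try simp only [Fin.val_rev] at *) <;> omega

end Shift

section Skew

variable {X : Type*} {m : ℕ}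

def skew (f : Fin m → X → X) (p : SigmaSpace m × X) : SigmaSpace m × X :=
  (shift m p.1, f (p.1 0) p.2)

theorem skew_iterate (f : Fin m → X → X) (j : ℕ) (ω : SigmaSpace m) (x : X) :
    (skew f)^[j] (ω, x) = ((shift m)^[j] ω, wordMap f (orbitWord j ω) x) := by
  induction j with
  | zero => rfl
  | succ j ih =>
    rw [Function.iterate_succ_apply', ih]
    simp only [skew, orbitWord, wordMap_cons, shift_iterate_apply, zero_add,
      Function.iterate_succ_apply']

theorem birkhoff_skew (f : Fin m → X → X) (φ : X → ℝ) (c : ℝ) (n : ℕ) (ω : SigmaSpace m)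
    (x : X) :
    birkhoff (fun _ : Fin 1 => skew f) (fun p => c + φ p.2) (List.replicate n 0) (ω, x) =
      n * c + birkhoff f φ (orbitWord n ω) x := by
  induction n with
  | zero => simp [orbitWord]
  | succ n ih =>
    rw [List.replicate_succ, birkhoff_cons, ih, wordMap_const_replicate, skew_iterate, orbitWord,
      birkhoff_cons]
    push_cast
    ring

/-- As `v` varies, the points `glue K u v` form a `2⁻ᴷ`-net, for the Bowen metric of the shift
along `n` steps, of the sequences with window `u`; over each of them `E u` is placed. -/
noncomputable def skewLift {n : ℕ} (K : ℕ) (E : (Fin n → Fin m) → Finset X) :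
    Finset (SigmaSpace m × X) :=
  open Classical in
  (Finset.univ.sigma fun uv : (Fin n → Fin m) × (Fin (2 * K + 1) → Fin m) => E uv.1).image
    fun q => (glue K q.1.1 q.1.2, q.2)

theorem sum_exp_birkhoff_skewLift_le (f : Fin m → X → X) (φ : X → ℝ) (c : ℝ) {n : ℕ} (K : ℕ)
    (E : (Fin n → Fin m) → Finset X) :
    ∑ p ∈ skewLift K E, Real.exp (birkhoff (fun _ : Fin 1 => skew f) (fun p => c + φ p.2)
      (List.replicate n 0) p) ≤
      Real.exp (n * c) * m ^ (2 * K + 1) *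
        ∑ u, ∑ y ∈ E u, Real.exp (birkhoff f φ (List.ofFn u) y) := by
  classical
  refine (Finset.sum_image_le_of_nonneg fun _ _ => (Real.exp_pos _).le).trans_eq ?_
  rw [Finset.sum_sigma, Fintype.sum_prod_type]
  simp only [birkhoff_skew, orbitWord_eq_ofFn_window, window_glue, Real.exp_add,
    ← Finset.mul_sum, Finset.sum_const, Finset.card_univ, Fintype.card_fun, Fintype.card_fin,
    nsmul_eq_mul]
  push_cast
  ring

variable [PseudoMetricSpace X] {f : Fin m → X → X}

theorem bowenDist_skew_lt_iff {K n : ℕ} {ω ω' : SigmaSpace m} {x x' : X} :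
    bowenDist (fun _ : Fin 1 => skew f) (List.replicate n 0) (ω, x) (ω', x') < (1 / 2 : ℝ) ^ K ↔
      EqOn ω ω' (Icc (-K : ℤ) (n + K)) ∧ bowenDist f (orbitWord n ω) x x' < (1 / 2 : ℝ) ^ K := by
  rw [bowenDist_const_lt_iff,
    bowenDist_lt_iff_of_cons (W := fun j => orbitWord j ω) (fun j => ω j) rfl (fun _ => rfl)]
  simp only [skew_iterate, Prod.dist_eq, max_lt_iff, forall_and, forall_dist_shift_iterate_lt_iff]
  refine and_congr_right fun h => forall₂_congr fun j hj => ?_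
  rw [orbitWord_congr (n := j) (ω := ω') (ω' := ω) (h.symm.mono fun t ht => ?_)]
  simp only [mem_Ico, mem_Icc] at ht ⊢
  omega

theorem isSpanningSet_skewLift {n K : ℕ} {E : (Fin n → Fin m) → Finset X}
    (hE : ∀ u, IsSpanningSet f (List.ofFn u) ((1 / 2 : ℝ) ^ K) (E u)) :
    IsSpanningSet (fun _ : Fin 1 => skew f) (List.replicate n 0) ((1 / 2 : ℝ) ^ K)
      (skewLift K E) := by
  rintro ⟨ω, x⟩
  obtain ⟨v, hv⟩ := exists_eqOn_glue n K ω
  obtain ⟨y, hy, hxy⟩ := hE (window n ω) x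
  refine ⟨(glue K (window n ω) v, y), ?_, ?_⟩
  · classical
    exact Finset.mem_image.2 ⟨⟨(window n ω, v), y⟩,
      Finset.mem_sigma.2 ⟨Finset.mem_univ _, hy⟩, rfl⟩
  rw [bowenDist_skew_lt_iff, orbitWord_eq_ofFn_window]
  exact ⟨hv, hxy⟩

theorem hasSpanningSets_skew (hspan : HasSpanningSets f) :
    HasSpanningSets (fun _ : Fin 1 => skew f) := by
  intro l ε hε
  obtain ⟨K, hK⟩ := exists_pow_lt_of_lt_one hε (by norm_num : (1 / 2 : ℝ) < 1)
  choose E hE using fun u : Fin l.length → Fin m =>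
    hspan (List.ofFn u) ((1 / 2 : ℝ) ^ K) (by positivity)
  rw [show l = List.replicate l.length 0 from
    List.eq_replicate_iff.2 ⟨rfl, fun a _ => Subsingleton.elim a 0⟩]
  exact ⟨_, (isSpanningSet_skewLift (K := K) hE).mono hK.le⟩

theorem isSpanningSet_skew_fiber [NeZero m] [DecidableEq X] {n K : ℕ}
    {E : Finset (SigmaSpace m × X)}
    (hE : IsSpanningSet (fun _ : Fin 1 => skew f) (List.replicate n 0) ((1 / 2 : ℝ) ^ K) E)
    (u : Fin n → Fin m) :
    IsSpanningSet f (List.ofFn u) ((1 / 2 : ℝ) ^ K)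
      ((E.filter fun p => window n p.1 = u).image Prod.snd) := by
  intro x
  obtain ⟨⟨ω, y⟩, hq, hxy⟩ := hE (glue K u 0, x)
  rw [bowenDist_skew_lt_iff, orbitWord_eq_ofFn_window, window_glue] at hxy
  have hωu : window n ω = u := by
    rw [← window_glue K u 0]
    funext i
    have hi := i.isLt
    exact (hxy.1 (by simp only [mem_Icc]; omega)).symm
  exact ⟨y, Finset.mem_image_of_mem _ (Finset.mem_filter.2 ⟨hq, hωu⟩), hxy.2⟩

theorem exp_mul_sum_Qword_le_Qword_skew [NeZero m]
    (hspan : HasSpanningSets (fun _ : Fin 1 => skew f)) (φ : X → ℝ) (c : ℝ) (n K : ℕ) :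
    Real.exp (n * c) * ∑ u : Fin n → Fin m, Qword f φ (List.ofFn u) ((1 / 2 : ℝ) ^ K) ≤
      Qword (fun _ : Fin 1 => skew f) (fun p => c + φ p.2) (List.replicate n 0)
        ((1 / 2 : ℝ) ^ K) := by
  classical
  obtain ⟨E₀, hE₀⟩ := hspan (List.replicate n 0) ((1 / 2 : ℝ) ^ K) (by positivity)
  refine le_csInf ⟨_, E₀, hE₀, rfl⟩ ?_
  rintro _ ⟨E, hE, rfl⟩
  rw [Finset.mul_sum, ← Finset.sum_fiberwise E fun p => window n p.1]
  refine Finset.sum_le_sum fun u _ => ?_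
  calc Real.exp (n * c) * Qword f φ (List.ofFn u) ((1 / 2 : ℝ) ^ K)
      ≤ Real.exp (n * c) * ∑ y ∈ (E.filter fun p => window n p.1 = u).image Prod.snd,
          Real.exp (birkhoff f φ (List.ofFn u) y) := by
        gcongr
        exact Qword_le_sum φ (isSpanningSet_skew_fiber hE u)
    _ ≤ Real.exp (n * c) * ∑ p ∈ E with window n p.1 = u,
          Real.exp (birkhoff f φ (List.ofFn u) p.2) := by
        gcongr
        exact Finset.sum_image_le_of_nonneg fun _ _ => (Real.exp_pos _).le
    _ = ∑ p ∈ E with window n p.1 = u, Real.exp (birkhoff (fun _ : Fin 1 => skew f)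
          (fun p => c + φ p.2) (List.replicate n 0) p) := by
        rw [Finset.mul_sum]
        refine Finset.sum_congr rfl fun ⟨ω, y⟩ hp => ?_
        rw [birkhoff_skew, orbitWord_eq_ofFn_window, (Finset.mem_filter.1 hp).2, Real.exp_add]

theorem Qword_skew_le [NeZero m] (hspan : HasSpanningSets f) (φ : X → ℝ) (c : ℝ) (n K : ℕ) :
    Qword (fun _ : Fin 1 => skew f) (fun p => c + φ p.2) (List.replicate n 0)
        ((1 / 2 : ℝ) ^ K) ≤
      Real.exp (n * c) * m ^ (2 * K + 1) *
        ∑ u : Fin n → Fin m, Qword f φ (List.ofFn u) ((1 / 2 : ℝ) ^ K) := by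
  have hm : 0 < m := Nat.pos_of_ne_zero (NeZero.ne m)
  rw [← div_le_iff₀' (by positivity)]
  refine Real.le_sum_sInf_of_forall_mem (fun u => ?_) fun s hs => ?_
  · obtain ⟨E, hE⟩ := hspan (List.ofFn u) ((1 / 2 : ℝ) ^ K) (by positivity)
    exact ⟨_, E, hE, rfl⟩
  · choose E hE hsE using hs
    rw [div_le_iff₀' (by positivity), funext hsE]
    exact (Qword_le_sum _ (isSpanningSet_skewLift hE)).trans
      (sum_exp_birkhoff_skewLift_le f φ c K E)

theorem pressureAt_skew [NeZero m] [Nonempty X] (hspan : HasSpanningSets f) {φ : X → ℝ}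
    {C : ℝ} (hφ : ∀ x, C ≤ φ x) (c : ℝ) (K : ℕ) :
    pressureAt (fun _ : Fin 1 => skew f) (fun p => c + φ p.2) ((1 / 2 : ℝ) ^ K) =
      ((c + Real.log m : ℝ) : EReal) + pressureAt f φ ((1 / 2 : ℝ) ^ K) := by
  have hm : (0 : ℝ) < m := by exact_mod_cast Nat.pos_of_ne_zero (NeZero.ne m)
  have hexp : ∀ n : ℕ, Real.exp (n * (c + Real.log m)) = Real.exp (n * c) * m ^ n := fun n => by
    rw [mul_add, Real.exp_add, Real.exp_nat_mul (Real.log m), Real.exp_log hm]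
  have hsum : ∀ n : ℕ, (m : ℝ) ^ n * Qn f φ n ((1 / 2 : ℝ) ^ K) =
      ∑ u : Fin n → Fin m, Qword f φ (List.ofFn u) ((1 / 2 : ℝ) ^ K) := fun n => by
    simpa using card_pow_mul_Qn f φ n ((1 / 2 : ℝ) ^ K)
  refine limsup_log_div_eq_add (fun n => Qn_pos hspan hφ n (by positivity))
    (D := m ^ (2 * K + 1)) (fun n => ?_) (fun n => ?_)
  · rw [Qn_fin_one, hexp, mul_assoc, hsum]
    exact exp_mul_sum_Qword_le_Qword_skew (hasSpanningSets_skew hspan) φ c n K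
  · rw [Qn_fin_one, hexp, mul_assoc, hsum]
    exact (Qword_skew_le hspan φ c n K).trans_eq (by ring)

end Skew

/-- For the skew product `F(ω,x) = (σω, f_{ω₀}(x))` on `Σ_m × X` and
`g(ω,x) = c + φ(x)`, the classical topological pressure (realized as the pressure of the
free semigroup action with the single generator `F`) satisfies
`P(F,g) = c + log m + P(f₀,…,f_{m-1},φ)`. -/
theorem stmt_0 {X : Type*} [MetricSpace X] [CompactSpace X] [Nonempty X]
    {m : ℕ} (hm : 0 < m)
    (f : Fin m → X → X) (hf : ∀ i, Continuous (f i))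
    (φ : X → ℝ) (hφ : Continuous φ) (c : ℝ)
    (F : SigmaSpace m × X → SigmaSpace m × X)
    (hF : F = fun p => (shift m p.1, f (p.1 0) p.2))
    (g : SigmaSpace m × X → ℝ) (hg : g = fun p => c + φ p.2) :
    pressure (fun _ : Fin 1 => F) g =
      (c : EReal) + (Real.log (m : ℝ) : EReal) + pressure f φ := by
  subst hF hg
  have : NeZero m := ⟨hm.ne'⟩
  obtain ⟨C, hC⟩ := (isCompact_range hφ).bddBelow
  have hφC : ∀ x, C ≤ φ x := fun x => hC (mem_range_self x)
  have hspan : HasSpanningSets f := hasSpanningSets_of_compactSpace hf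
  change pressure (fun _ : Fin 1 => skew f) (fun p => c + φ p.2) = _
  rw [pressure_eq_iSup_half_pow (hasSpanningSets_skew hspan) (C := c + C)
      fun p => (add_le_add_iff_left c).2 (hφC p.2), pressure_eq_iSup_half_pow hspan hφC]
  simp_rw [pressureAt_skew hspan hφC c]
  rw [← EReal.coe_add_iSup, EReal.coe_add]

end FSA
end

section
/- Let f_0,…,f_{m−1} be measure-preserving transformations of a probability space (X,𝔅,μ) and ξ a finite measurable partition of X. Then the sequence a_n = m^{−n} Σ_{|w|=n} H_μ(⋁_{w'≤w} f_{w'}^{−1}ξ) is subadditive (a_{n_1+n_2} ≤ a_{n_1} + a_{n_2} for all n_1,n_2 ≥ 1), and consequently the limit lim_{n→∞}(1/n)[ m^{−n} Σ_{|w|=n} H_μ(⋁_{w'≤w} f_{w'}^{−1}ξ) ] exists. -/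
/-!
Entropy is subadditive under joins, `H(ξ ∨ η) ≤ H(ξ) + H(η)` (concavity of `-x log x`), and
does not increase under pullback by a measure-preserving map. For a word `w = uv` the join
along `w` is `f_v⁻¹(join along u) ∨ (join along v)`, so `H(join w) ≤ H(join u) + H(join v)`.
Averaging over all words of length `n₁ + n₂` gives `a_{n₁+n₂} ≤ a_{n₁} + a_{n₂}`, and Fekete's
lemma gives the limit of `a_n / n`, the sequence being nonnegative.
-/

open Filter Topology MeasureTheory Set

namespace FSA

section Meas

variable {X : Type*} {ι : Type*}

/-- `μ` is invariant under each generator: `μ(fᵢ⁻¹ A) = μ(A)` for every measurable set `A`. -/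
def IsInvariant [MeasurableSpace X] (f : ι → X → X) (μ : Measure X) : Prop :=
  ∀ i : ι, ∀ A : Set X, MeasurableSet A → μ (f i ⁻¹' A) = μ A

/-- A finite measurable partition of `X`, viewed as a finite set of measurable, pairwise
disjoint sets whose union is `X`. -/
def IsPartition [MeasurableSpace X] (ξ : Finset (Set X)) : Prop :=
  (∀ A ∈ ξ, MeasurableSet A) ∧
    ((↑ξ : Set (Set X)).Pairwise fun A B => A ∩ B = ∅) ∧
    ⋃₀ (↑ξ : Set (Set X)) = Set.univ

/-- Entropy of a finite partition: `H_μ(ξ) = -Σ_{A∈ξ} μ(A) log μ(A)` (with `0 log 0 = 0`). -/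
noncomputable def entPart [MeasurableSpace X] (μ : Measure X) (ξ : Finset (Set X)) : ℝ :=
  ∑ A ∈ ξ, Real.negMulLog (μ A).toReal

/-- Conditional entropy
`H_μ(ξ|η) = -Σ_{C∈η, μ(C)≠0} Σ_{A∈ξ} μ(A∩C) log (μ(A∩C)/μ(C))`. -/
noncomputable def condEntPart [MeasurableSpace X] (μ : Measure X) (ξ η : Finset (Set X)) : ℝ :=
  - ∑ C ∈ η, ∑ A ∈ ξ,
      if μ C = 0 then 0
      else (μ (A ∩ C)).toReal * Real.log ((μ (A ∩ C)).toReal / (μ C).toReal)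

/-- The join `ξ ∨ η` of two partitions. -/
noncomputable def partJoin (ξ η : Finset (Set X)) : Finset (Set X) :=
  @Finset.image _ _ (Classical.decEq _) (fun p : Set X × Set X => p.1 ∩ p.2) (ξ ×ˢ η)

/-- The preimage partition `T⁻¹ ξ`. -/
noncomputable def preimgPart (T : X → X) (ξ : Finset (Set X)) : Finset (Set X) :=
  @Finset.image _ _ (Classical.decEq _) (fun A : Set X => T ⁻¹' A) ξ

/-- The join `⋁_{w'≤w} f_{w'}⁻¹ ξ` over the `|w|` words `w'` consisting of the empty word
and the proper suffixes of `w`. -/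
noncomputable def wordJoin (f : ι → X → X) (ξ : Finset (Set X)) (w : List ι) :
    Finset (Set X) :=
  w.tails.tail.foldr (fun w' acc => partJoin (preimgPart (wordMap f w') ξ) acc) {Set.univ}

/-- `a_n = m^{-n} Σ_{|w|=n} H_μ(⋁_{w'≤w} f_{w'}⁻¹ ξ)`. -/
noncomputable def entSeq [MeasurableSpace X] [Fintype ι] (f : ι → X → X) (μ : Measure X)
    (ξ : Finset (Set X)) (n : ℕ) : ℝ :=
  (1 / (Fintype.card ι : ℝ) ^ n) * ∑ w : Fin n → ι, entPart μ (wordJoin f ξ (List.ofFn w))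

/-- `h_μ(f₀,…,f_{m-1},ξ) = lim_n (1/n) a_n`; the limit exists, and is expressed here as a
`limsup`. -/
noncomputable def hPart [MeasurableSpace X] [Fintype ι] (f : ι → X → X) (μ : Measure X)
    (ξ : Finset (Set X)) : ℝ :=
  Filter.limsup (fun n : ℕ => entSeq f μ ξ n / (n : ℝ)) atTop

/-- Measure-theoretic entropy of the free semigroup action:
`h_μ(f₀,…,f_{m-1}) = sup_ξ h_μ(f₀,…,f_{m-1},ξ)` over all finite measurable partitions. -/
noncomputable def freeEntropy [MeasurableSpace X] [Fintype ι] (f : ι → X → X)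
    (μ : Measure X) : EReal :=
  ⨆ (ξ : Finset (Set X)) (_ : IsPartition ξ), (↑(hPart f μ ξ) : EReal)

end Meas

open Real in
/-- `H(A, B) ≤ H(A) + H(B)` for a joint distribution `p` of `(A, B)`. -/
lemma sum_sum_negMulLog_le {α β : Type*} {s : Finset α} {t : Finset β} {p : α → β → ℝ}
    (hp : ∀ a ∈ s, ∀ b ∈ t, 0 ≤ p a b) (hsum : ∑ a ∈ s, ∑ b ∈ t, p a b = 1) :
    ∑ a ∈ s, ∑ b ∈ t, negMulLog (p a b) ≤
      ∑ a ∈ s, negMulLog (∑ b ∈ t, p a b) + ∑ b ∈ t, negMulLog (∑ a ∈ s, p a b) := by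
  set P : α → ℝ := fun a => ∑ b ∈ t, p a b
  have hP : ∀ a ∈ s, 0 ≤ P a := fun a ha => Finset.sum_nonneg (hp a ha)
  -- `p a b / P a` is the conditional distribution of the second coordinate given `a`
  have hfactor : ∀ a ∈ s, ∀ b ∈ t, p a b = P a * (p a b / P a) := by
    intro a ha b hb
    rcases eq_or_ne (P a) 0 with h | h
    · simp [(Finset.sum_eq_zero_iff_of_nonneg (hp a ha)).1 h b hb]
    · rw [mul_div_cancel₀ _ h]
  have hchain : ∀ a ∈ s, ∑ b ∈ t, negMulLog (p a b) =
      negMulLog (P a) + P a * ∑ b ∈ t, negMulLog (p a b / P a) := by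
    intro a ha
    have hmarg : (∑ b ∈ t, p a b / P a) * negMulLog (P a) = negMulLog (P a) := by
      rcases eq_or_ne (P a) 0 with h | h
      · simp [h]
      · rw [← Finset.sum_div, div_self h, one_mul]
    rw [← hmarg, Finset.sum_mul, Finset.mul_sum, ← Finset.sum_add_distrib]
    refine Finset.sum_congr rfl fun b hb => ?_
    conv_lhs => rw [hfactor a ha b hb, negMulLog_mul]
  have hjensen : ∀ b ∈ t, ∑ a ∈ s, P a * negMulLog (p a b / P a) ≤
      negMulLog (∑ a ∈ s, p a b) := by
    intro b hb
    have := concaveOn_negMulLog.le_map_sum hP hsum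
      fun a ha => div_nonneg (hp a ha b hb) (hP a ha)
    simp only [smul_eq_mul] at this
    rwa [Finset.sum_congr rfl fun a ha => (hfactor a ha b hb).symm] at this
  calc ∑ a ∈ s, ∑ b ∈ t, negMulLog (p a b)
      = ∑ a ∈ s, negMulLog (P a) + ∑ b ∈ t, ∑ a ∈ s, P a * negMulLog (p a b / P a) := by
        rw [Finset.sum_congr rfl hchain, Finset.sum_add_distrib, Finset.sum_comm]
        simp only [Finset.mul_sum]
    _ ≤ _ := add_le_add_right (Finset.sum_le_sum hjensen) _

section Partitions

variable {X : Type*}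

lemma mem_partJoin {ξ η : Finset (Set X)} {C : Set X} :
    C ∈ partJoin ξ η ↔ ∃ A ∈ ξ, ∃ B ∈ η, A ∩ B = C := by
  simp [partJoin, and_assoc]

lemma mem_preimgPart {T : X → X} {ξ : Finset (Set X)} {C : Set X} :
    C ∈ preimgPart T ξ ↔ ∃ A ∈ ξ, T ⁻¹' A = C := by
  simp [preimgPart]

lemma singleton_univ_partJoin (ξ : Finset (Set X)) : partJoin {univ} ξ = ξ := by
  ext C
  simp [mem_partJoin]

lemma partJoin_assoc (ξ η ζ : Finset (Set X)) :
    partJoin (partJoin ξ η) ζ = partJoin ξ (partJoin η ζ) := by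
  ext D
  simp only [mem_partJoin]
  grind [Set.inter_assoc]

lemma preimgPart_partJoin (T : X → X) (ξ η : Finset (Set X)) :
    preimgPart T (partJoin ξ η) = partJoin (preimgPart T ξ) (preimgPart T η) := by
  ext D
  simp only [mem_partJoin, mem_preimgPart]
  grind [Set.preimage_inter]

lemma preimgPart_comp (g h : X → X) (ξ : Finset (Set X)) :
    preimgPart (g ∘ h) ξ = preimgPart h (preimgPart g ξ) := by
  ext D
  simp only [mem_preimgPart]
  grind [Set.preimage_comp]

lemma preimgPart_singleton_univ (T : X → X) : preimgPart T {univ} = {univ} := by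
  ext D
  simp [mem_preimgPart, eq_comm]

end Partitions

section IsPartition

variable {X : Type*} [MeasurableSpace X]

lemma isPartition_singleton_univ : IsPartition ({univ} : Finset (Set X)) := by
  simp [IsPartition]

lemma IsPartition.partJoin {ξ η : Finset (Set X)} (hξ : IsPartition ξ) (hη : IsPartition η) :
    IsPartition (partJoin ξ η) := by
  obtain ⟨hξm, hξd, hξu⟩ := hξ
  obtain ⟨hηm, hηd, hηu⟩ := hη
  refine ⟨?_, ?_, ?_⟩
  · simp only [mem_partJoin]
    rintro _ ⟨A, hA, B, hB, rfl⟩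
    exact (hξm A hA).inter (hηm B hB)
  · simp only [Set.Pairwise, Finset.mem_coe, mem_partJoin]
    rintro _ ⟨A, hA, B, hB, rfl⟩ _ ⟨A', hA', B', hB', rfl⟩ hne
    by_cases hAA : A = A'
    · subst hAA
      have hBB : B ∩ B' = ∅ := hηd hB hB' fun h => hne (by rw [h])
      grind
    · have := hξd hA hA' hAA
      grind
  · refine eq_univ_of_forall fun x => ?_
    obtain ⟨A, hA, hxA⟩ := mem_sUnion.1 (hξu ▸ mem_univ x)
    obtain ⟨B, hB, hxB⟩ := mem_sUnion.1 (hηu ▸ mem_univ x)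
    exact ⟨A ∩ B, mem_partJoin.2 ⟨A, hA, B, hB, rfl⟩, hxA, hxB⟩

lemma IsPartition.preimgPart {T : X → X} (hT : Measurable T) {ξ : Finset (Set X)}
    (hξ : IsPartition ξ) : IsPartition (preimgPart T ξ) := by
  obtain ⟨hξm, hξd, hξu⟩ := hξ
  refine ⟨?_, ?_, ?_⟩
  · simp only [mem_preimgPart]
    rintro _ ⟨A, hA, rfl⟩
    exact hT (hξm A hA)
  · simp only [Set.Pairwise, Finset.mem_coe, mem_preimgPart]
    rintro _ ⟨A, hA, rfl⟩ _ ⟨A', hA', rfl⟩ hne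
    rw [← preimage_inter, hξd hA hA' fun h => hne (by rw [h]), preimage_empty]
  · refine eq_univ_of_forall fun x => ?_
    obtain ⟨A, hA, hxA⟩ := mem_sUnion.1 (hξu ▸ mem_univ (T x))
    exact ⟨T ⁻¹' A, mem_preimgPart.2 ⟨A, hA, rfl⟩, hxA⟩

lemma IsPartition.sum_measure_inter {μ : Measure X} [IsFiniteMeasure μ] {η : Finset (Set X)}
    (hη : IsPartition η) {A : Set X} (hA : MeasurableSet A) :
    ∑ B ∈ η, (μ (A ∩ B)).toReal = (μ A).toReal := by
  obtain ⟨hηm, hηd, hηu⟩ := hη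
  have hdisj : (η : Set (Set X)).PairwiseDisjoint (A ∩ ·) := fun B hB B' hB' hne =>
    Set.disjoint_iff_inter_eq_empty.2 (by grind [hηd hB hB' hne])
  have hcover : ⋃ B ∈ η, A ∩ B = A := by
    rw [← inter_iUnion₂, ← Finset.set_biUnion_coe, ← sUnion_eq_biUnion, hηu, inter_univ]
  rw [← ENNReal.toReal_sum fun B _ => measure_ne_top μ _,
    ← measure_biUnion_finset hdisj fun B hB => hA.inter (hηm B hB), hcover]

end IsPartition

section Entropy

variable {X : Type*} [MeasurableSpace X] (μ : Measure X) [IsProbabilityMeasure μ]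

lemma negMulLog_measure_nonneg (A : Set X) : 0 ≤ Real.negMulLog (μ A).toReal :=
  Real.negMulLog_nonneg ENNReal.toReal_nonneg measureReal_le_one

lemma entPart_nonneg (ξ : Finset (Set X)) : 0 ≤ entPart μ ξ :=
  Finset.sum_nonneg fun A _ => negMulLog_measure_nonneg μ A

lemma entPart_partJoin_le {ξ η : Finset (Set X)} (hξ : IsPartition ξ) (hη : IsPartition η) :
    entPart μ (partJoin ξ η) ≤ entPart μ ξ + entPart μ η := by
  have hmarg_left : ∀ A ∈ ξ, ∑ B ∈ η, (μ (A ∩ B)).toReal = (μ A).toReal :=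
    fun A hA => hη.sum_measure_inter (hξ.1 A hA)
  have hmarg_right : ∀ B ∈ η, ∑ A ∈ ξ, (μ (A ∩ B)).toReal = (μ B).toReal := fun B hB => by
    simp_rw [inter_comm _ B]
    exact hξ.sum_measure_inter (hη.1 B hB)
  have htotal : ∑ A ∈ ξ, ∑ B ∈ η, (μ (A ∩ B)).toReal = 1 := by
    rw [Finset.sum_congr rfl hmarg_left]
    simpa using hξ.sum_measure_inter (μ := μ) MeasurableSet.univ
  calc entPart μ (partJoin ξ η)
      ≤ ∑ p ∈ ξ ×ˢ η, Real.negMulLog (μ (p.1 ∩ p.2)).toReal :=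
        Finset.sum_image_le_of_nonneg fun C _ => negMulLog_measure_nonneg μ C
    _ = ∑ A ∈ ξ, ∑ B ∈ η, Real.negMulLog (μ (A ∩ B)).toReal := Finset.sum_product _ _ _
    _ ≤ _ := by
        refine (sum_sum_negMulLog_le (fun _ _ _ _ => ENNReal.toReal_nonneg) htotal).trans_eq ?_
        congr 1
        · exact Finset.sum_congr rfl fun A hA => by rw [hmarg_left A hA]
        · exact Finset.sum_congr rfl fun B hB => by rw [hmarg_right B hB]

lemma entPart_preimgPart_le {T : X → X} (hT : MeasurePreserving T μ μ) {ξ : Finset (Set X)}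
    (hξ : IsPartition ξ) : entPart μ (preimgPart T ξ) ≤ entPart μ ξ :=
  calc entPart μ (preimgPart T ξ) ≤ ∑ A ∈ ξ, Real.negMulLog (μ (T ⁻¹' A)).toReal :=
        Finset.sum_image_le_of_nonneg fun C _ => negMulLog_measure_nonneg μ C
    _ = entPart μ ξ :=
        Finset.sum_congr rfl fun A hA => by rw [hT.measure_preimage (hξ.1 A hA).nullMeasurableSet]

end Entropy

lemma tails_tail_append {α : Type*} (u v : List α) :
    (u ++ v).tails.tail = u.tails.tail.map (· ++ v) ++ v.tails.tail := by
  cases u <;> simp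

section Words

variable {X ι : Type*} (f : ι → X → X) (ξ : Finset (Set X))

lemma wordMap_append (u v : List ι) : wordMap f (u ++ v) = wordMap f u ∘ wordMap f v := by
  induction u with
  | nil => rfl
  | cons a u ih => simp [wordMap, ih, Function.comp_assoc]

noncomputable def joinList (L : List (List ι)) : Finset (Set X) :=
  L.foldr (fun w acc => partJoin (preimgPart (wordMap f w) ξ) acc) {univ}

lemma wordJoin_eq_joinList (w : List ι) : wordJoin f ξ w = joinList f ξ w.tails.tail := rfl

lemma joinList_append (L₁ L₂ : List (List ι)) :
    joinList f ξ (L₁ ++ L₂) = partJoin (joinList f ξ L₁) (joinList f ξ L₂) := by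
  induction L₁ with
  | nil => exact (singleton_univ_partJoin _).symm
  | cons w L ih =>
    simp only [joinList, List.cons_append, List.foldr_cons] at ih ⊢
    rw [ih, partJoin_assoc]

lemma joinList_map_append (L : List (List ι)) (v : List ι) :
    joinList f ξ (L.map (· ++ v)) = preimgPart (wordMap f v) (joinList f ξ L) := by
  induction L with
  | nil => exact (preimgPart_singleton_univ _).symm
  | cons w L ih =>
    simp only [joinList, List.map_cons, List.foldr_cons] at ih ⊢
    rw [ih, wordMap_append, preimgPart_comp, preimgPart_partJoin]

lemma wordJoin_append (u v : List ι) :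
    wordJoin f ξ (u ++ v) =
      partJoin (preimgPart (wordMap f v) (wordJoin f ξ u)) (wordJoin f ξ v) := by
  rw [wordJoin_eq_joinList, tails_tail_append, joinList_append, joinList_map_append]
  rfl

end Words

section WordEntropy

variable {X ι : Type*} [MeasurableSpace X] {f : ι → X → X}

lemma measurable_wordMap (hf : ∀ i, Measurable (f i)) : ∀ w : List ι, Measurable (wordMap f w)
  | [] => measurable_id
  | a :: w => (hf a).comp (measurable_wordMap hf w)

lemma measurePreserving_wordMap {μ : Measure X} (hf : ∀ i, MeasurePreserving (f i) μ μ) :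
    ∀ w : List ι, MeasurePreserving (wordMap f w) μ μ
  | [] => MeasurePreserving.id μ
  | a :: w => (hf a).comp (measurePreserving_wordMap hf w)

lemma IsPartition.joinList (hf : ∀ i, Measurable (f i)) {ξ : Finset (Set X)}
    (hξ : IsPartition ξ) (L : List (List ι)) : IsPartition (joinList f ξ L) := by
  induction L with
  | nil => exact isPartition_singleton_univ
  | cons w L ih => exact (hξ.preimgPart (measurable_wordMap hf w)).partJoin ih

lemma entPart_wordJoin_append_le (μ : Measure X) [IsProbabilityMeasure μ]
    (hf : ∀ i, MeasurePreserving (f i) μ μ) {ξ : Finset (Set X)} (hξ : IsPartition ξ)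
    (u v : List ι) :
    entPart μ (wordJoin f ξ (u ++ v)) ≤
      entPart μ (wordJoin f ξ u) + entPart μ (wordJoin f ξ v) := by
  have hf' : ∀ i, Measurable (f i) := fun i => (hf i).measurable
  have hu : IsPartition (wordJoin f ξ u) := hξ.joinList hf' _
  have hv : IsPartition (wordJoin f ξ v) := hξ.joinList hf' _
  rw [wordJoin_append]
  exact (entPart_partJoin_le μ (hu.preimgPart (measurable_wordMap hf' v)) hv).trans
    (add_le_add (entPart_preimgPart_le μ (measurePreserving_wordMap hf v) hu) le_rfl)

end WordEntropy

open scoped BigOperators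

/-- A uniform word of length `n₁ + n₂` is the concatenation of independent uniform words of
lengths `n₁` and `n₂`. -/
lemma subadditive_expect_ofFn {ι : Type*} [Fintype ι] [Nonempty ι] {H : List ι → ℝ}
    (hH : ∀ u v, H (u ++ v) ≤ H u + H v) :
    Subadditive fun n => 𝔼 w : Fin n → ι, H (List.ofFn w) := by
  intro n₁ n₂
  calc 𝔼 w : Fin (n₁ + n₂) → ι, H (List.ofFn w)
      = 𝔼 p : (Fin n₁ → ι) × (Fin n₂ → ι), H (List.ofFn p.1 ++ List.ofFn p.2) :=
        (Fintype.expect_equiv (Fin.appendEquiv n₁ n₂) _ _ fun p => by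
          simp [Fin.appendEquiv, List.ofFn_fin_append]).symm
    _ ≤ 𝔼 p : (Fin n₁ → ι) × (Fin n₂ → ι), (H (List.ofFn p.1) + H (List.ofFn p.2)) :=
        Finset.expect_le_expect fun p _ => hH _ _
    _ = 𝔼 u : Fin n₁ → ι, H (List.ofFn u) + 𝔼 v : Fin n₂ → ι, H (List.ofFn v) := by
        rw [Finset.expect_add_distrib, ← Finset.univ_product_univ, Finset.expect_product,
          Finset.expect_product]
        simp

lemma entSeq_eq_expect {X ι : Type*} [MeasurableSpace X] [Fintype ι] (f : ι → X → X)
    (μ : Measure X) (ξ : Finset (Set X)) (n : ℕ) :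
    entSeq f μ ξ n = 𝔼 w : Fin n → ι, entPart μ (wordJoin f ξ (List.ofFn w)) := by
  rw [Fintype.expect_eq_sum_div_card, entSeq, Fintype.card_fun, Fintype.card_fin]
  push_cast
  ring

/-- For measure-preserving `f₀,…,f_{m-1}` and a finite measurable
partition `ξ`, the sequence `a_n = m^{-n} Σ_{|w|=n} H_μ(⋁_{w'≤w} f_{w'}⁻¹ ξ)` is
subadditive; consequently `lim_{n→∞} a_n / n` exists. -/
theorem stmt_14 {X : Type*} [MeasurableSpace X] (μ : Measure X) [IsProbabilityMeasure μ]
    {ι : Type*} [Fintype ι] [Nonempty ι]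
    (f : ι → X → X) (hf : ∀ i, MeasurePreserving (f i) μ μ)
    (ξ : Finset (Set X)) (hξ : IsPartition ξ) :
    (∀ n₁ n₂ : ℕ, 1 ≤ n₁ → 1 ≤ n₂ →
      entSeq f μ ξ (n₁ + n₂) ≤ entSeq f μ ξ n₁ + entSeq f μ ξ n₂) ∧
    ∃ L : ℝ, Filter.Tendsto (fun n : ℕ => entSeq f μ ξ n / (n : ℝ)) atTop (𝓝 L) := by
  have hsub : Subadditive (entSeq f μ ξ) := by
    rw [funext (entSeq_eq_expect f μ ξ)]
    exact subadditive_expect_ofFn (H := fun w => entPart μ (wordJoin f ξ w))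
      (entPart_wordJoin_append_le μ hf hξ)
  have hbdd : BddBelow (range fun n : ℕ => entSeq f μ ξ n / n) := by
    refine ⟨0, forall_mem_range.2 fun n => div_nonneg ?_ n.cast_nonneg⟩
    rw [entSeq_eq_expect]
    exact Finset.expect_nonneg fun w _ => entPart_nonneg μ _
  exact ⟨fun n₁ n₂ _ _ => hsub n₁ n₂, hsub.lim, hsub.tendsto_lim hbdd⟩

end FSA
end
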